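/- Let A ∈ ℝ^{d×d}, x_0 ∈ ℝ^d, and let an explicit s-stage Runge–Kutta method with real coefficients 𝔄 ∈ ℝ^{s×s}, 𝔟 ∈ ℝ^s be applied to ẋ = Ax along a symmetric complex time grid Δ = [t_0, …, t_n] with real endpoints t_0, t_n ∈ ℝ (symmetric means the step sequence τ_j = t_{j+1} − t_j admits an involution π with τ_j = conj(τ_{π(j+1)−1})). Then the numerical terminal value x_n = ∏_{j=0}^{n−1} P(τ_j A)·x_0 is real, where P is the stability polynomial of the method. -/

import Mathlib

open Matrix Polynomial Finset

/-!
Since `P` and `A` have real coefficients, entrywise conjugation sends the factor `P(τ_l A)` to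
`P(conj τ_l · A) = P(τ_{π l} A)`. All factors are polynomials in `A`, so they commute, and the
conjugated product, being a reordering of the original one along `π`, equals it. A matrix fixed
by conjugation is real, hence so is its image of the real vector `x₀`.
-/

theorem Commute.aeval_left {R A : Type*} [CommSemiring R] [Semiring A] [Algebra R A]
    {x y : A} (h : Commute x y) (p : R[X]) : Commute (aeval x p) y := by
  induction p using Polynomial.induction_on' with
  | add p q hp hq => simpa only [map_add] using hp.add_left hq
  | monomial m a =>
    simpa only [aeval_monomial] using (Algebra.commute_algebraMap_left a y).mul_left (h.pow_left m)

theorem Commute.aeval {R A : Type*} [CommSemiring R] [Semiring A] [Algebra R A]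
    {x y : A} (h : Commute x y) (p q : R[X]) : Commute (aeval x p) (aeval y q) :=
  (h.symm.aeval_left q).symm.aeval_left p

theorem prod_map_finRange_comp_perm {M : Type*} [Monoid M] {n : ℕ} (f : Fin n → M)
    (hf : ∀ i j, Commute (f i) (f j)) (σ : Equiv.Perm (Fin n)) :
    ((List.finRange n).map (f ∘ σ)).prod = ((List.finRange n).map f).prod := by
  rw [← List.map_map]
  refine List.Perm.prod_eq' (List.Perm.map f ?_) ?_
  · exact (List.perm_ext_iff_of_nodup ((List.nodup_finRange n).map σ.injective)
      (List.nodup_finRange n)).2 fun a => by simpa using ⟨σ.symm a, σ.apply_symm_apply a⟩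
  · refine List.pairwise_of_forall_mem_list ?_
    simp only [List.mem_map]
    rintro _ ⟨i, -, rfl⟩ _ ⟨j, -, rfl⟩
    exact hf i j

theorem map_conj_aeval_smul_map_ofReal {d : Type*} [Fintype d] [DecidableEq d]
    (A : Matrix d d ℝ) (P : ℝ[X]) (z : ℂ) :
    (aeval (z • A.map Complex.ofReal) P).map (starRingEnd ℂ)
      = aeval (starRingEnd ℂ z • A.map Complex.ofReal) P := by
  rw [← Complex.conjAe_coe, ← AlgEquiv.mapMatrix_apply, ← aeval_algHom_apply]
  congr 1
  ext i j
  simp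

theorem im_mulVec_ofReal_eq_zero {m n : Type*} [Fintype n] {M : Matrix m n ℂ}
    (hM : M.map (starRingEnd ℂ) = M) (x : n → ℝ) (i : m) :
    ((M *ᵥ fun j => (x j : ℂ)) i).im = 0 := by
  rw [← Complex.conj_eq_iff_im]
  simp only [mulVec, dotProduct, map_sum, map_mul, Complex.conj_ofReal]
  conv_rhs => rw [← hM]
  rfl

theorem rk_symmetric_grid_real_terminal_general {d n : ℕ}
    (A : Matrix (Fin d) (Fin d) ℝ)
    (P : Polynomial ℝ)
    (τ : Fin n → ℂ)
    (π : Equiv.Perm (Fin n)) (hπ : ∀ j, π (π j) = j)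
    (hsym : ∀ j, τ j = starRingEnd ℂ (τ (π j)))
    (x₀ : Fin d → ℝ) :
    ∀ i, ((((List.finRange n).map
        (fun l => Polynomial.aeval ((τ l) • A.map Complex.ofReal) P)).prod.mulVec
          (fun i => (x₀ i : ℂ))) i).im = 0 := by
  set M : Fin n → Matrix (Fin d) (Fin d) ℂ := fun l => aeval (τ l • A.map Complex.ofReal) P
  have hconj_τ : ∀ l, starRingEnd ℂ (τ l) = τ (π l) := fun l => by rw [hsym (π l), hπ]
  have hconj : ∀ l, (M l).map (starRingEnd ℂ) = M (π l) := fun l => by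
    rw [map_conj_aeval_smul_map_ofReal, hconj_τ]
  have hcomm : ∀ l m, Commute (M l) (M m) := fun l m =>
    (((Commute.refl _).smul_left (τ l)).smul_right (τ m)).aeval P P
  have hreal : ((List.finRange n).map M).prod.map (starRingEnd ℂ)
      = ((List.finRange n).map M).prod := by
    rw [← RingHom.mapMatrix_apply, map_list_prod, List.map_map]
    simp only [Function.comp_def, RingHom.mapMatrix_apply, hconj]
    exact prod_map_finRange_comp_perm M hcomm π
  exact im_mulVec_ofReal_eq_zero hreal x₀

/-- An explicit `s`-stage Runge–Kutta method with real coefficients `𝔄, 𝔟`,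
applied to `ẋ = Ax` (`A` real) along a symmetric complex time grid
`t_0, …, t_n` with real endpoints, produces a real terminal value
`x_n = ∏_{j=0}^{n-1} P(τ_j A) · x_0` from a real initial value `x_0`, where
`P` is the (real) stability polynomial of the method. -/
theorem rk_symmetric_grid_real_terminal {s d n : ℕ}
    (𝔄 : Matrix (Fin s) (Fin s) ℝ) (h𝔄 : ∀ i j : Fin s, i ≤ j → 𝔄 i j = 0)
    (𝔟 : Fin s → ℝ) (A : Matrix (Fin d) (Fin d) ℝ)
    (k : ℂ → (Fin d → ℂ) → Fin s → (Fin d → ℂ))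
    (hk : ∀ (τ : ℂ) (x : Fin d → ℂ) (i : Fin s),
      k τ x i = (A.map Complex.ofReal).mulVec x
        + τ • ∑ j ∈ Finset.univ.filter (· < i),
            (𝔄 i j : ℂ) • (A.map Complex.ofReal).mulVec (k τ x j))
    (P : Polynomial ℝ)
    (hP : ∀ (τ : ℂ) (x : Fin d → ℂ),
      x + τ • ∑ i, (𝔟 i : ℂ) • k τ x i
        = (Polynomial.aeval (τ • A.map Complex.ofReal) P).mulVec x)
    (t : Fin (n + 1) → ℂ) (ht0 : (t 0).im = 0) (htn : (t (Fin.last n)).im = 0)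
    (τ : Fin n → ℂ) (hτ : ∀ j : Fin n, τ j = t j.succ - t j.castSucc)
    (π : Equiv.Perm (Fin n)) (hπ : ∀ j, π (π j) = j)
    (hsym : ∀ j, τ j = starRingEnd ℂ (τ (π j)))
    (x₀ : Fin d → ℝ) :
    ∀ i, ((((List.finRange n).map
        (fun l => Polynomial.aeval ((τ l) • A.map Complex.ofReal) P)).prod.mulVec
          (fun i => (x₀ i : ℂ))) i).im = 0 :=
  rk_symmetric_grid_real_terminal_general A P τ π hπ hsym x₀
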